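/- arXiv:2306.01216 — 2 statements merged into one kernel-verified Lean document; each statement's English description precedes it below -/
import Mathlib

section
/- Let k ≥ 3 be odd and n ≥ 6. Then mp^k(K_n) = n − 1, i.e., for every set F of at most n−2 edges, K_n − F has a perfect or almost perfect integer k-matching, and there is a set of n−1 edges (all edges at one vertex) whose removal destroys both. -/
open SimpleGraph Finset

namespace IntKM

variable {V : Type*}

/-- Sum of edge weights over edges incident to `v`. -/
def vsum [Fintype V] [DecidableEq V] (h : Sym2 V → ℕ) (v : V) : ℕ :=
  ∑ e ∈ Finset.univ.filter (fun e => v ∈ e), h e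

/-- `h` is an integer `k`-matching of `G`. -/
def IsIntKMatching [Fintype V] [DecidableEq V] (G : SimpleGraph V) (k : ℕ)
    (h : Sym2 V → ℕ) : Prop :=
  (∀ e, h e ≤ k) ∧ (∀ e, e ∉ G.edgeSet → h e = 0) ∧ ∀ v, vsum h v ≤ k

/-- `G` has a perfect integer `k`-matching. -/
def HasPerfect [Fintype V] [DecidableEq V] (G : SimpleGraph V) (k : ℕ) : Prop :=
  ∃ h : Sym2 V → ℕ, IsIntKMatching G k h ∧ ∀ v, vsum h v = k

/-- `G` has an almost perfect integer `k`-matching. -/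
def HasAlmost [Fintype V] [DecidableEq V] (G : SimpleGraph V) (k : ℕ) : Prop :=
  ∃ h : Sym2 V → ℕ, IsIntKMatching G k h ∧
    ∃ v' : V, vsum h v' = k - 1 ∧ ∀ v, v ≠ v' → vsum h v = k

/-- `M` is a matching (a set of pairwise non-adjacent edges) of `G`. -/
def IsMatchingSet (G : SimpleGraph V) (M : Finset (Sym2 V)) : Prop :=
  ↑M ⊆ G.edgeSet ∧ ∀ e₁ ∈ M, ∀ e₂ ∈ M, e₁ ≠ e₂ → ∀ v : V, v ∈ e₁ → v ∉ e₂

/-- `G` has a perfect matching. -/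
def HasPerfectM (G : SimpleGraph V) : Prop :=
  ∃ M : Finset (Sym2 V), IsMatchingSet G M ∧ ∀ v : V, ∃ e ∈ M, v ∈ e

/-- `G` has an almost perfect matching. -/
def HasAlmostM (G : SimpleGraph V) : Prop :=
  ∃ M : Finset (Sym2 V), IsMatchingSet G M ∧
    ∃ v' : V, (∀ e ∈ M, v' ∉ e) ∧ ∀ v : V, v ≠ v' → ∃ e ∈ M, v ∈ e

/-- Integer `k`-matching preclusion number `mp^k(G)`. -/
noncomputable def mpk [Fintype V] [DecidableEq V] (G : SimpleGraph V) (k : ℕ) : ℕ :=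
  sInf {n | ∃ F : Finset (Sym2 V), ↑F ⊆ G.edgeSet ∧ F.card = n ∧
    ¬ HasPerfect (G.deleteEdges ↑F) k ∧ ¬ HasAlmost (G.deleteEdges ↑F) k}

/-- Strong integer `k`-matching preclusion number `smp^k(G)`. -/
noncomputable def smpk [Fintype V] [DecidableEq V] (G : SimpleGraph V) (k : ℕ) : ℕ :=
  sInf {n | ∃ (S : Finset V) (F : Finset (Sym2 V)), ↑F ⊆ G.edgeSet ∧ S.card + F.card = n ∧
    ¬ HasPerfect ((G.deleteEdges ↑F).induce ((↑(Sᶜ) : Set V))) k ∧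
    ¬ HasAlmost ((G.deleteEdges ↑F).induce ((↑(Sᶜ) : Set V))) k}

/-- Matching preclusion number `mp(G)`. -/
noncomputable def mp [Fintype V] [DecidableEq V] (G : SimpleGraph V) : ℕ :=
  sInf {n | ∃ F : Finset (Sym2 V), ↑F ⊆ G.edgeSet ∧ F.card = n ∧
    ¬ HasPerfectM (G.deleteEdges ↑F) ∧ ¬ HasAlmostM (G.deleteEdges ↑F)}

/-- Strong matching preclusion number `smp(G)`. -/
noncomputable def smp [Fintype V] [DecidableEq V] (G : SimpleGraph V) : ℕ :=
  sInf {n | ∃ (S : Finset V) (F : Finset (Sym2 V)), ↑F ⊆ G.edgeSet ∧ S.card + F.card = n ∧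
    ¬ HasPerfectM ((G.deleteEdges ↑F).induce ((↑(Sᶜ) : Set V))) ∧
    ¬ HasAlmostM ((G.deleteEdges ↑F).induce ((↑(Sᶜ) : Set V)))}

/-- Number of odd components with at least three vertices. -/
noncomputable def oddBigComponents {W : Type*} (H : SimpleGraph W) : ℕ :=
  Nat.card {c : H.ConnectedComponent // Odd (Nat.card c.supp) ∧ 3 ≤ Nat.card c.supp}

/-- Number of isolated vertices (components with exactly one vertex). -/
noncomputable def isolatedCount {W : Type*} (H : SimpleGraph W) : ℕ :=
  Nat.card {c : H.ConnectedComponent // Nat.card c.supp = 1}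

/-- Total weight of an edge-weight function. -/
def totalWeight [Fintype V] [DecidableEq V] (h : Sym2 V → ℕ) : ℕ :=
  ∑ e : Sym2 V, h e

/-- Integer `k`-matching number `μ_k(G)`. -/
noncomputable def intKMatchingNumber [Fintype V] [DecidableEq V]
    (G : SimpleGraph V) (k : ℕ) : ℕ :=
  sSup {w | ∃ h : Sym2 V → ℕ, IsIntKMatching G k h ∧ totalWeight h = w}

/-- Matching number `μ(G)`. -/
noncomputable def matchingNumber [Fintype V] [DecidableEq V] (G : SimpleGraph V) : ℕ :=
  sSup {n | ∃ M : Finset (Sym2 V), IsMatchingSet G M ∧ M.card = n}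

end IntKM

open IntKM


/-!
For even `n`, weight `k` on a perfect matching of `K_n - F` is a perfect integer `k`-matching.
Such a matching is built greedily: as long as at most `m - 2` edges are missing from `K_m`, some
non-missing edge `uv` meets enough missing edges that `K_m - u - v` again misses at most `m - 4`.

For odd `n` and `k = 2t + 1`, the weights `t, t, t + 1` on the sides `uv, uw, vw` of a triangle
give `u` the weight `k - 1` and `v, w` the weight `k`. If the triangle meets at least
`|F| + 5 - n` edges of `F`, the remaining `K_{n-3}` misses at most `n - 5` edges and has a perfect
matching. A suitable triangle is found around a vertex of maximum degree in `F`.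

Conversely, deleting the `n - 1` edges at a vertex isolates it, and an isolated vertex receives
weight `0`, which is neither `k` nor `k - 1`.
-/

namespace IntKM

variable {V : Type*}

section SupportedOn

variable {F : Finset (Sym2 V)} {s t : Finset V} {h g : Sym2 V → ℕ} {k : ℕ}

/-- `h` weights only edges of the complete graph on `s` that are not in `F`. -/
def SupportedOn (F : Finset (Sym2 V)) (s : Finset V) (h : Sym2 V → ℕ) : Prop :=
  ∀ e, h e ≠ 0 → e ∉ F ∧ ¬ e.IsDiag ∧ ∀ x ∈ e, x ∈ s

lemma SupportedOn.mono (hst : s ⊆ t) (hh : SupportedOn F s h) : SupportedOn F t h :=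
  fun e he => (hh e he).imp_right fun h' => h'.imp_right fun hs x hx => hst (hs x hx)

lemma SupportedOn.add [DecidableEq V] (hh : SupportedOn F s h) (hg : SupportedOn F t g) :
    SupportedOn F (s ∪ t) (h + g) := by
  intro e he
  by_cases hhe : h e = 0
  · exact (hg.mono subset_union_right) e (by simpa [hhe] using he)
  · exact (hh.mono subset_union_left) e hhe

lemma SupportedOn.add_le (hh : SupportedOn F s h) (hg : SupportedOn F t g) (hst : Disjoint s t)
    (hhk : ∀ e, h e ≤ k) (hgk : ∀ e, g e ≤ k) (e : Sym2 V) : (h + g) e ≤ k := by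
  by_cases hhe : h e = 0
  · simpa [hhe] using hgk e
  by_cases hge : g e = 0
  · simpa [hge] using hhk e
  have hx := Sym2.out_fst_mem e
  exact absurd ((hg e hge).2.2 _ hx) (Finset.disjoint_left.mp hst ((hh e hhe).2.2 _ hx))

lemma supportedOn_single [DecidableEq V] {u v : V} (huv : u ≠ v) (hF : s(u, v) ∉ F) (c : ℕ) :
    SupportedOn F {u, v} (Pi.single s(u, v) c) := by
  intro e he
  obtain rfl : e = s(u, v) := by
    by_contra hne
    simp [hne] at he
  refine ⟨hF, by simpa using huv, fun x hx => ?_⟩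
  rcases Sym2.mem_iff.mp hx with rfl | rfl <;> simp

end SupportedOn

section Weights

variable [Fintype V] [DecidableEq V] {F : Finset (Sym2 V)} {s t : Finset V}
  {h g : Sym2 V → ℕ} {k : ℕ}

lemma vsum_add (h g : Sym2 V → ℕ) (v : V) : vsum (h + g) v = vsum h v + vsum g v :=
  Finset.sum_add_distrib

lemma vsum_single (e : Sym2 V) (c : ℕ) (v : V) :
    vsum (Pi.single e c) v = if v ∈ e then c else 0 := by
  simp [vsum, Finset.sum_pi_single']

lemma SupportedOn.vsum_eq_zero (hh : SupportedOn F s h) {v : V} (hv : v ∉ s) : vsum h v = 0 :=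
  Finset.sum_eq_zero fun e he => by
    by_contra hne
    exact hv ((hh e hne).2.2 v (Finset.mem_filter.mp he).2)

structure IsPerfectOn (k : ℕ) (F : Finset (Sym2 V)) (s : Finset V) (h : Sym2 V → ℕ) : Prop where
  le : ∀ e, h e ≤ k
  supportedOn : SupportedOn F s h
  vsum_eq : ∀ v ∈ s, vsum h v = k

structure IsAlmostPerfectOn (k : ℕ) (F : Finset (Sym2 V)) (s : Finset V) (u : V)
    (h : Sym2 V → ℕ) : Prop where
  le : ∀ e, h e ≤ k
  supportedOn : SupportedOn F s h
  vsum_self : vsum h u = k - 1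
  vsum_eq : ∀ v ∈ s, v ≠ u → vsum h v = k

lemma isPerfectOn_empty : IsPerfectOn k F ∅ 0 :=
  ⟨fun _ => Nat.zero_le k, fun _ he => absurd rfl he, fun _ hv => absurd hv (notMem_empty _)⟩

lemma isPerfectOn_pair {u v : V} (huv : u ≠ v) (hF : s(u, v) ∉ F) :
    IsPerfectOn k F {u, v} (Pi.single s(u, v) k) where
  le e := by by_cases he : e = s(u, v) <;> simp [he]
  supportedOn := supportedOn_single huv hF k
  vsum_eq x hx := by
    rw [vsum_single, if_pos]
    rcases mem_insert.mp hx with rfl | hx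
    · exact Sym2.mem_mk_left _ _
    · exact (mem_singleton.mp hx) ▸ Sym2.mem_mk_right _ _

lemma IsPerfectOn.union (hh : IsPerfectOn k F s h) (hg : IsPerfectOn k F t g)
    (hst : Disjoint s t) : IsPerfectOn k F (s ∪ t) (h + g) where
  le := hh.supportedOn.add_le hg.supportedOn hst hh.le hg.le
  supportedOn := hh.supportedOn.add hg.supportedOn
  vsum_eq v hv := by
    rw [vsum_add]
    rcases mem_union.mp hv with hvs | hvt
    · rw [hh.vsum_eq v hvs, hg.supportedOn.vsum_eq_zero (Finset.disjoint_left.mp hst hvs),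
        add_zero]
    · rw [hg.vsum_eq v hvt, hh.supportedOn.vsum_eq_zero (Finset.disjoint_right.mp hst hvt),
        zero_add]

lemma IsAlmostPerfectOn.union {u : V} (hh : IsAlmostPerfectOn k F s u h)
    (hg : IsPerfectOn k F t g) (hst : Disjoint s t) (hu : u ∈ s) :
    IsAlmostPerfectOn k F (s ∪ t) u (h + g) where
  le := hh.supportedOn.add_le hg.supportedOn hst hh.le hg.le
  supportedOn := hh.supportedOn.add hg.supportedOn
  vsum_self := by
    rw [vsum_add, hh.vsum_self, hg.supportedOn.vsum_eq_zero (Finset.disjoint_left.mp hst hu),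
      add_zero]
  vsum_eq v hv hvu := by
    rw [vsum_add]
    rcases mem_union.mp hv with hvs | hvt
    · rw [hh.vsum_eq v hvs hvu, hg.supportedOn.vsum_eq_zero (Finset.disjoint_left.mp hst hvs),
        add_zero]
    · rw [hg.vsum_eq v hvt, hh.supportedOn.vsum_eq_zero (Finset.disjoint_right.mp hst hvt),
        zero_add]

def IsFreeTriangle (F : Finset (Sym2 V)) (u v w : V) : Prop :=
  u ≠ v ∧ u ≠ w ∧ v ≠ w ∧ s(u, v) ∉ F ∧ s(u, w) ∉ F ∧ s(v, w) ∉ F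

lemma isAlmostPerfectOn_triangle {u v w : V} (tri : IsFreeTriangle F u v w) (t : ℕ) :
    IsAlmostPerfectOn (2 * t + 1) F {u, v, w} u
      (Pi.single s(u, v) t + Pi.single s(u, w) t + Pi.single s(v, w) (t + 1)) := by
  obtain ⟨huv, huw, hvw, h₁, h₂, h₃⟩ := tri
  refine ⟨fun e => ?_, ?_, ?_, fun x hx hxu => ?_⟩
  · simp only [Pi.add_apply, Pi.single_apply]
    split_ifs <;> simp_all <;> omega
  · refine ((supportedOn_single huv h₁ t).add (supportedOn_single huw h₂ t)).add
      (supportedOn_single hvw h₃ (t + 1)) |>.mono fun x => ?_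
    simp only [mem_union, mem_insert, mem_singleton]
    tauto
  · simp [vsum_add, vsum_single, huv, huw]
    omega
  · simp only [mem_insert, mem_singleton] at hx
    rcases hx with rfl | rfl | rfl
    · exact absurd rfl hxu
    · simp [vsum_add, vsum_single, hvw, huv.symm]
      omega
    · simp [vsum_add, vsum_single, huw.symm, hvw.symm]
      omega

lemma isIntKMatching_deleteEdges (hle : ∀ e, h e ≤ k) (hh : SupportedOn F s h)
    (hv : ∀ v, vsum h v ≤ k) : IsIntKMatching ((⊤ : SimpleGraph V).deleteEdges ↑F) k h := by
  refine ⟨hle, fun e he => ?_, hv⟩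
  by_contra hne
  obtain ⟨heF, hdiag, -⟩ := hh e hne
  rw [edgeSet_deleteEdges, edgeSet_top] at he
  exact he ⟨hdiag, heF⟩

lemma IsPerfectOn.hasPerfect (hh : IsPerfectOn k F univ h) :
    HasPerfect ((⊤ : SimpleGraph V).deleteEdges ↑F) k :=
  ⟨h, isIntKMatching_deleteEdges hh.le hh.supportedOn fun v => (hh.vsum_eq v (mem_univ v)).le,
    fun v => hh.vsum_eq v (mem_univ v)⟩

lemma IsAlmostPerfectOn.hasAlmost {u : V} (hh : IsAlmostPerfectOn k F univ u h) :
    HasAlmost ((⊤ : SimpleGraph V).deleteEdges ↑F) k := by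
  have hvsum (v : V) : vsum h v ≤ k := by
    by_cases hvu : v = u
    · exact hvu ▸ hh.vsum_self ▸ Nat.sub_le k 1
    · exact (hh.vsum_eq v (mem_univ v) hvu).le
  exact ⟨h, isIntKMatching_deleteEdges hh.le hh.supportedOn hvsum, u, hh.vsum_self,
    fun v hvu => hh.vsum_eq v (mem_univ v) hvu⟩

lemma not_hasPerfect_and_not_hasAlmost_of_isolated {G : SimpleGraph V} (hk : 2 ≤ k) {v : V}
    (hv : ∀ e ∈ G.edgeSet, v ∉ e) : ¬ HasPerfect G k ∧ ¬ HasAlmost G k := by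
  have hzero {h : Sym2 V → ℕ} (hh : IsIntKMatching G k h) : vsum h v = 0 :=
    Finset.sum_eq_zero fun e he => hh.2.1 e fun heG => hv e heG (mem_filter.mp he).2
  refine ⟨fun ⟨h, hh, hsum⟩ => ?_, fun ⟨h, hh, u, hu, hsum⟩ => ?_⟩
  · have := hsum v
    rw [hzero hh] at this
    omega
  · by_cases hvu : v = u
    · subst hvu
      rw [hzero hh] at hu
      omega
    · have := hsum v hvu
      rw [hzero hh] at this
      omega

end Weights

section EdgeCounting

variable [DecidableEq V] {F : Finset (Sym2 V)}

def incident (F : Finset (Sym2 V)) (x : V) : Finset (Sym2 V) := F.filter (x ∈ ·)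

lemma mem_incident {x : V} {e : Sym2 V} : e ∈ incident F x ↔ e ∈ F ∧ x ∈ e := mem_filter

lemma disjoint_incident {u v : V} (huv : u ≠ v) (h : s(u, v) ∉ F) :
    Disjoint (incident F u) (incident F v) := by
  rw [Finset.disjoint_left]
  intro e heu hev
  rw [mem_incident] at heu hev
  exact h ((Sym2.mem_and_mem_iff huv).mp ⟨heu.2, hev.2⟩ ▸ heu.1)

lemma card_inter_sym2_add_card_le {A s : Finset V} {C : Finset (Sym2 V)} (hA : A ⊆ s)
    (hC : C ⊆ F ∩ s.sym2) (hCA : ∀ e ∈ C, ∃ x ∈ e, x ∉ A) :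
    #(F ∩ A.sym2) + #C ≤ #(F ∩ s.sym2) := by
  rw [← card_union_of_disjoint]
  · exact card_le_card (union_subset (inter_subset_inter_left (sym2_mono hA)) hC)
  · rw [Finset.disjoint_left]
    intro e he heC
    obtain ⟨x, hx, hxA⟩ := hCA e heC
    exact hxA (mem_sym2_iff.mp (mem_inter.mp he).2 x hx)

lemma exists_isFreeTriangle_of_card_inter_sym2_le_one {S : Finset V} (hS : 4 ≤ #S)
    (hF : #(F ∩ S.sym2) ≤ 1) : ∃ a ∈ S, ∃ b ∈ S, ∃ c ∈ S, IsFreeTriangle F a b c := by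
  obtain ⟨y, hy⟩ : ∃ y, ∀ e ∈ F ∩ S.sym2, y ∈ e := by
    rcases (F ∩ S.sym2).eq_empty_or_nonempty with h₀ | ⟨e₀, he₀⟩
    · obtain ⟨y, -⟩ := card_pos.mp (by omega : 0 < #S)
      exact ⟨y, by simp [h₀]⟩
    · exact ⟨e₀.out.1, fun e he => card_le_one.mp hF e₀ he₀ e he ▸ Sym2.out_fst_mem e₀⟩
  have hfree : ∀ p ∈ S.erase y, ∀ q ∈ S.erase y, s(p, q) ∉ F := fun p hp q hq h => by
    have hpq := hy _ (mem_inter.mpr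
      ⟨h, mk_mem_sym2_iff.mpr ⟨mem_of_mem_erase hp, mem_of_mem_erase hq⟩⟩)
    rcases Sym2.mem_iff.mp hpq with rfl | rfl
    exacts [ne_of_mem_erase hp rfl, ne_of_mem_erase hq rfl]
  obtain ⟨a, ha, b, hb, c, hc, hab, hac, hbc⟩ := two_lt_card.mp
    (by have := pred_card_le_card_erase (s := S) (a := y); omega : 2 < #(S.erase y))
  exact ⟨a, mem_of_mem_erase ha, b, mem_of_mem_erase hb, c, mem_of_mem_erase hc,
    hab, hac, hbc, hfree a ha b hb, hfree a ha c hc, hfree b hb c hc⟩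

variable [Fintype V]

lemma card_inter_sym2_add_card_incident_le {A : Finset V} {u : V} (hu : u ∉ A) :
    #(F ∩ A.sym2) + #(incident F u) ≤ #F := by
  simpa using card_inter_sym2_add_card_le (subset_univ A) (C := incident F u)
    (by rw [sym2_univ, inter_univ]; exact filter_subset _ F)
    fun e he => ⟨u, (mem_incident.mp he).2, hu⟩

def neighbors (F : Finset (Sym2 V)) (x : V) : Finset V := univ.filter fun y => s(x, y) ∈ F

lemma mem_neighbors {x y : V} : y ∈ neighbors F x ↔ s(x, y) ∈ F := by simp [neighbors]

lemma card_neighbors (x : V) : #(neighbors F x) = #(incident F x) := by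
  refine card_nbij (fun y => s(x, y)) (fun y hy => ?_) (fun y _ z _ h => Sym2.congr_right.mp h)
    (fun e he => ?_)
  · exact mem_incident.mpr ⟨mem_neighbors.mp hy, Sym2.mem_mk_left x y⟩
  · obtain ⟨heF, hx⟩ := mem_incident.mp he
    exact ⟨Sym2.Mem.other hx, mem_neighbors.mpr ((Sym2.other_spec hx).symm ▸ heF),
      Sym2.other_spec hx⟩

lemma sum_card_incident (hF : ∀ e ∈ F, ¬ e.IsDiag) : ∑ x, #(incident F x) = 2 * #F := by
  have := sum_card_bipartiteAbove_eq_sum_card_bipartiteBelow (s := univ) (t := F) (· ∈ ·)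
  have hbelow (e : Sym2 V) : bipartiteBelow (· ∈ ·) univ e = e.toFinset := by
    ext
    simp [bipartiteBelow]
  simp only [bipartiteAbove, hbelow] at this
  simp only [incident, this]
  rw [sum_congr rfl fun e he => Sym2.card_toFinset_of_not_isDiag e (hF e he), sum_const,
    smul_eq_mul, mul_comm]

lemma two_mul_card_le (hF : ∀ e ∈ F, ¬ e.IsDiag) (A : Finset V) (c : ℕ)
    (hA : ∀ x ∉ A, #(incident F x) = 0) (hc : ∀ x, #(incident F x) ≤ c) : 2 * #F ≤ #A * c := by
  rw [← sum_card_incident hF, ← sum_subset (subset_univ A) fun x _ hx => hA x hx]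
  simpa using sum_le_card_nsmul A _ c fun x _ => hc x

lemma exists_nonadj {s : Finset V} {u : V} (h : #(incident F u) + 2 ≤ #s) :
    ∃ v ∈ s, v ≠ u ∧ s(u, v) ∉ F := by
  obtain ⟨v, hv, hvn⟩ := exists_mem_notMem_of_card_lt_card (s := insert u (neighbors F u)) (t := s)
    (by have := card_insert_le u (neighbors F u); rw [card_neighbors] at this; omega)
  simp only [mem_insert, mem_neighbors, not_or] at hvn
  exact ⟨v, hv, hvn.1, hvn.2⟩

lemma exists_common_nonadj {u v : V}
    (h : #(incident F u) + #(incident F v) + 3 ≤ Fintype.card V) :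
    ∃ w, w ≠ u ∧ w ≠ v ∧ s(u, w) ∉ F ∧ s(v, w) ∉ F := by
  obtain ⟨w, -, hwn⟩ := exists_mem_notMem_of_card_lt_card
    (s := insert u (insert v (neighbors F u ∪ neighbors F v))) (t := univ) (by
      have := card_insert_le u (insert v (neighbors F u ∪ neighbors F v))
      have := card_insert_le v (neighbors F u ∪ neighbors F v)
      have := card_union_le (neighbors F u) (neighbors F v)
      rw [card_neighbors, card_neighbors] at this
      rw [card_univ]
      omega)
  simp only [mem_insert, mem_union, mem_neighbors, not_or] at hwn
  exact ⟨w, hwn.1, hwn.2.1, hwn.2.2.1, hwn.2.2.2⟩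

lemma exists_nonadj_pair {S : Finset V} (hS : 3 ≤ #S) (hF : #(F ∩ S.sym2) < #S) :
    ∃ v ∈ S, ∃ w ∈ S, v ≠ w ∧ s(v, w) ∉ F := by
  obtain ⟨a, ha⟩ : S.Nonempty := card_pos.mp (by omega)
  by_cases hdeg : #(incident (F ∩ S.sym2) a) + 2 ≤ #S
  · obtain ⟨w, hw, hwa, hnot⟩ := exists_nonadj hdeg
    exact ⟨a, ha, w, hw, hwa.symm, fun h => hnot (mem_inter.mpr ⟨h, mk_mem_sym2_iff.mpr ⟨ha, hw⟩⟩)⟩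
  have hstar : incident (F ∩ S.sym2) a = F ∩ S.sym2 :=
    eq_of_subset_of_card_le (filter_subset _ _) (by omega)
  obtain ⟨b, hb, c, hc, hbc⟩ := one_lt_card.mp
    (by have := pred_card_le_card_erase (s := S) (a := a); omega : 1 < #(S.erase a))
  refine ⟨b, mem_of_mem_erase hb, c, mem_of_mem_erase hc, hbc, fun h => ?_⟩
  have hbc' : s(b, c) ∈ incident (F ∩ S.sym2) a := by
    rw [hstar]
    exact mem_inter.mpr ⟨h, mk_mem_sym2_iff.mpr ⟨mem_of_mem_erase hb, mem_of_mem_erase hc⟩⟩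
  rcases Sym2.mem_iff.mp (mem_incident.mp hbc').2 with rfl | rfl
  exacts [ne_of_mem_erase hb rfl, ne_of_mem_erase hc rfl]

-- If every non-neighbour of the maximum-degree vertex `u` is isolated, all edges of `F` lie in
-- the closed neighbourhood of `u`, and the handshake lemma bounds `#F`.
lemma exists_nonadj_of_isMaxDegree (hF : ∀ e ∈ F, ¬ e.IsDiag) {s : Finset V} (hFs : F ⊆ s.sym2)
    {u : V} (hmax : ∀ x, #(incident F x) ≤ #(incident F u)) (hs : #(incident F u) + 2 ≤ #s) :
    ∃ v ∈ s, v ≠ u ∧ s(u, v) ∉ F ∧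
      (1 ≤ #(incident F v) ∨ 2 * #F ≤ (#(incident F u) + 1) * #(incident F u)) := by
  by_cases hpos : ∃ v, v ≠ u ∧ s(u, v) ∉ F ∧ 1 ≤ #(incident F v)
  · obtain ⟨v, hvu, hnot, hv⟩ := hpos
    obtain ⟨e, he⟩ := card_pos.mp hv
    exact ⟨v, mem_sym2_iff.mp (hFs (mem_incident.mp he).1) v (mem_incident.mp he).2, hvu, hnot,
      .inl hv⟩
  push Not at hpos
  obtain ⟨v, hv, hvu, hnot⟩ := exists_nonadj hs
  refine ⟨v, hv, hvu, hnot, .inr ?_⟩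
  calc 2 * #F ≤ #(insert u (neighbors F u)) * #(incident F u) := by
        refine two_mul_card_le hF _ _ (fun x hx => ?_) hmax
        simp only [mem_insert, mem_neighbors, not_or] at hx
        have := hpos x hx.1 hx.2
        omega
    _ ≤ (#(incident F u) + 1) * #(incident F u) := by
        gcongr
        exact (card_insert_le _ _).trans (by rw [card_neighbors])

lemma exists_nonadj_pair_card_inter_sym2_sdiff_le (hF : ∀ e ∈ F, ¬ e.IsDiag) {s : Finset V}
    (hs : 4 ≤ #s) (hFs : #(F ∩ s.sym2) + 2 ≤ #s) :
    ∃ u ∈ s, ∃ v ∈ s, u ≠ v ∧ s(u, v) ∉ F ∧ #(F ∩ (s \ {u, v}).sym2) + 2 ≤ #(s \ {u, v}) := by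
  set Φ := F ∩ s.sym2
  obtain ⟨u, hu, hmax⟩ := s.exists_max_image (fun x => #(incident Φ x)) (card_pos.mp (by omega))
  have hmax' (x : V) : #(incident Φ x) ≤ #(incident Φ u) := by
    by_cases hx : x ∈ s
    · exact hmax x hx
    · rw [card_eq_zero.mpr (eq_empty_of_forall_notMem fun e he =>
        hx (mem_sym2_iff.mp (mem_inter.mp (mem_incident.mp he).1).2 x (mem_incident.mp he).2))]
      exact Nat.zero_le _
  have hdeg : #(incident Φ u) ≤ #Φ := card_le_card (filter_subset _ _)
  obtain ⟨v, hv, hvu, hnotΦ, hcase⟩ := exists_nonadj_of_isMaxDegree (F := Φ)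
    (fun e he => hF e (mem_inter.mp he).1) inter_subset_right hmax' (by omega)
  have huv : {u, v} ⊆ s := insert_subset hu (singleton_subset_iff.mpr hv)
  refine ⟨u, hu, v, hv, hvu.symm, fun h => hnotΦ (mem_inter.mpr ⟨h, mk_mem_sym2_iff.mpr ⟨hu, hv⟩⟩),
    ?_⟩
  have hcover := card_inter_sym2_add_card_le (C := incident Φ u ∪ incident Φ v) sdiff_subset
    (union_subset (filter_subset _ _) (filter_subset _ _)) fun e he => by
      rcases mem_union.mp he with he | he
      · exact ⟨u, (mem_incident.mp he).2, fun h => (mem_sdiff.mp h).2 (mem_insert_self u {v})⟩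
      · exact ⟨v, (mem_incident.mp he).2, fun h =>
          (mem_sdiff.mp h).2 (mem_insert_of_mem (mem_singleton_self v))⟩
  change _ + _ ≤ #Φ at hcover
  rw [card_union_of_disjoint (disjoint_incident hvu.symm hnotΦ)] at hcover
  rw [card_sdiff_of_subset huv, card_pair hvu.symm]
  have := hmax' v
  obtain hd | hd : #(incident Φ u) ≤ 1 ∨ 2 ≤ #(incident Φ u) := by omega
  · have : (#(incident Φ u) + 1) * #(incident Φ u) ≤ 2 * #(incident Φ u) :=
      Nat.mul_le_mul_right _ (by omega)
    omega
  · omega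

end EdgeCounting

section Matchings

variable [Fintype V] [DecidableEq V] {F : Finset (Sym2 V)}

theorem exists_isPerfectOn (k : ℕ) (hF : ∀ e ∈ F, ¬ e.IsDiag) (s : Finset V) (hs : Even #s)
    (hFs : #(F ∩ s.sym2) + 2 ≤ #s ∨ s = ∅) : ∃ h, IsPerfectOn k F s h := by
  induction s using Finset.strongInduction with
  | H s ih =>
  obtain hFs | rfl := hFs
  · obtain ⟨u, hu, v, hv, huv, huvF, hrest⟩ : ∃ u ∈ s, ∃ v ∈ s, u ≠ v ∧ s(u, v) ∉ F ∧
        (#(F ∩ (s \ {u, v}).sym2) + 2 ≤ #(s \ {u, v}) ∨ s \ {u, v} = ∅) := by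
      obtain ⟨m, hm⟩ := hs
      obtain h2 | h4 : #s = 2 ∨ 4 ≤ #s := by omega
      · obtain ⟨u, v, huv, rfl⟩ := card_eq_two.mp h2
        refine ⟨u, by simp, v, by simp, huv, fun h => ?_, .inr (Finset.sdiff_self _)⟩
        have := card_pos.mpr ⟨_, mem_inter.mpr ⟨h, mk_mem_sym2_iff.mpr ⟨mem_insert_self u {v},
          mem_insert_of_mem (mem_singleton_self v)⟩⟩⟩
        omega
      · obtain ⟨u, hu, v, hv, huv, huvF, hrest⟩ :=
          exists_nonadj_pair_card_inter_sym2_sdiff_le hF h4 hFs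
        exact ⟨u, hu, v, hv, huv, huvF, .inl hrest⟩
    have huvs : {u, v} ⊆ s := insert_subset hu (singleton_subset_iff.mpr hv)
    obtain ⟨h, hh⟩ := ih _ (sdiff_ssubset huvs (insert_nonempty _ _))
      (by rw [card_sdiff_of_subset huvs, card_pair huv]; exact hs.tsub even_two) hrest
    exact ⟨_, union_sdiff_of_subset huvs ▸ (isPerfectOn_pair huv huvF).union hh disjoint_sdiff⟩
  · exact ⟨0, isPerfectOn_empty⟩

/-- A triangle of `K_V - F` whose vertices meet at least `#F + 5 - |V|` edges of `F`, so that at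
most `|V| - 5` edges of `F` avoid it. -/
def IsHeavyTriangle (F : Finset (Sym2 V)) (a b c : V) : Prop :=
  IsFreeTriangle F a b c ∧
    #F + 5 ≤ Fintype.card V + (#(incident F a) + #(incident F b) + #(incident F c))

lemma exists_isHeavyTriangle_of_mid_degree (hFn : #F + 2 ≤ Fintype.card V) {u : V}
    (hd : 3 ≤ #(incident F u)) (hdn : #(incident F u) + 4 ≤ Fintype.card V) :
    ∃ a b c, IsHeavyTriangle F a b c := by
  set M := (insert u (neighbors F u))ᶜ
  have hM : Fintype.card V ≤ #M + (#(incident F u) + 1) := by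
    have := card_insert_le u (neighbors F u)
    rw [card_neighbors] at this
    rw [card_compl]
    omega
  have hFM := card_inter_sym2_add_card_incident_le (F := F) (A := M) (u := u) (by simp [M])
  obtain ⟨v, hv, w, hw, hvw, hvwF⟩ := exists_nonadj_pair (F := F) (S := M) (by omega) (by omega)
  simp only [M, mem_compl, mem_insert, mem_neighbors, not_or] at hv hw
  exact ⟨u, v, w, ⟨Ne.symm hv.1, Ne.symm hw.1, hvw, hv.2, hw.2, hvwF⟩, by omega⟩

lemma exists_isHeavyTriangle_of_high_degree (hF : ∀ e ∈ F, ¬ e.IsDiag)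
    (hn : 7 ≤ Fintype.card V) (hFn : #F + 2 ≤ Fintype.card V) {u : V}
    (hd : Fintype.card V ≤ #(incident F u) + 3) : ∃ a b c, IsHeavyTriangle F a b c := by
  have hS := card_inter_sym2_add_card_incident_le (F := F) (A := neighbors F u) (u := u)
    fun h => hF _ (mem_neighbors.mp h) (Sym2.mk_isDiag_iff.mpr rfl)
  obtain ⟨a, ha, b, hb, c, hc, tri⟩ := exists_isFreeTriangle_of_card_inter_sym2_le_one
    (F := F) (S := neighbors F u) (by rw [card_neighbors]; omega) (by omega)
  have hpos (x : V) (hx : x ∈ neighbors F u) : 1 ≤ #(incident F x) :=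
    card_pos.mpr ⟨s(u, x), mem_incident.mpr ⟨mem_neighbors.mp hx, Sym2.mem_mk_right u x⟩⟩
  exact ⟨a, b, c, tri, by have := hpos a ha; have := hpos b hb; have := hpos c hc; omega⟩

lemma exists_isHeavyTriangle_of_low_degree (hF : ∀ e ∈ F, ¬ e.IsDiag)
    (hn : 7 ≤ Fintype.card V) (hFn : #F + 2 ≤ Fintype.card V) {u : V}
    (hmax : ∀ x, #(incident F x) ≤ #(incident F u)) (hd : #(incident F u) ≤ 2) :
    ∃ a b c, IsHeavyTriangle F a b c := by
  obtain ⟨v, -, hvu, huv, hcase⟩ := exists_nonadj_of_isMaxDegree hF (s := univ) (by simp) hmax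
    (by rw [card_univ]; omega)
  have hv := hmax v
  obtain ⟨w, hwu, hwv, huw, hvw⟩ := exists_common_nonadj (F := F) (u := u) (v := v) (by omega)
  refine ⟨u, v, w, ⟨hvu.symm, hwu.symm, hwv.symm, huv, huw, hvw⟩, ?_⟩
  obtain hd1 | hd2 : #(incident F u) ≤ 1 ∨ #(incident F u) = 2 := by omega
  · have hmatching := two_mul_card_le hF univ 1 (by simp) fun x => (hmax x).trans hd1
    have : (#(incident F u) + 1) * #(incident F u) ≤ 2 * #(incident F u) :=
      Nat.mul_le_mul_right _ (by omega)
    rw [card_univ] at hmatching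
    omega
  · rw [hd2] at hcase
    omega

lemma exists_isHeavyTriangle (hF : ∀ e ∈ F, ¬ e.IsDiag) (hn : 7 ≤ Fintype.card V)
    (hFn : #F + 2 ≤ Fintype.card V) : ∃ a b c, IsHeavyTriangle F a b c := by
  obtain ⟨u, -, hmax⟩ := univ.exists_max_image (fun x => #(incident F x))
    (card_pos.mp (by rw [card_univ]; omega))
  obtain hd | hd | hd : #(incident F u) ≤ 2 ∨ Fintype.card V ≤ #(incident F u) + 3 ∨
      (3 ≤ #(incident F u) ∧ #(incident F u) + 4 ≤ Fintype.card V) := by omega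
  · exact exists_isHeavyTriangle_of_low_degree hF hn hFn (fun x => hmax x (mem_univ x)) hd
  · exact exists_isHeavyTriangle_of_high_degree hF hn hFn hd
  · exact exists_isHeavyTriangle_of_mid_degree hFn hd.1 hd.2

theorem exists_isAlmostPerfectOn (hF : ∀ e ∈ F, ¬ e.IsDiag) (hn : 7 ≤ Fintype.card V)
    (hodd : Odd (Fintype.card V)) (hFn : #F + 2 ≤ Fintype.card V) (t : ℕ) :
    ∃ u h, IsAlmostPerfectOn (2 * t + 1) F univ u h := by
  obtain ⟨u, v, w, tri, hheavy⟩ := exists_isHeavyTriangle hF hn hFn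
  obtain ⟨huv, huw, hvw, h₁, h₂, h₃⟩ := id tri
  have hT : #{u, v, w} = 3 := card_eq_three.mpr ⟨u, v, w, huv, huw, hvw, rfl⟩
  have hC : incident F u ∪ incident F v ∪ incident F w ⊆ F ∩ univ.sym2 := by
    rw [sym2_univ, inter_univ]
    exact union_subset (union_subset (filter_subset _ F) (filter_subset _ F)) (filter_subset _ F)
  have hcover := card_inter_sym2_add_card_le (A := univ \ {u, v, w}) (subset_univ _) hC
    fun e he => by
      simp only [mem_union, mem_incident] at he
      rcases he with (he | he) | he
      · exact ⟨u, he.2, by simp⟩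
      · exact ⟨v, he.2, by simp⟩
      · exact ⟨w, he.2, by simp⟩
  rw [card_union_of_disjoint (disjoint_union_left.mpr
      ⟨disjoint_incident huw h₂, disjoint_incident hvw h₃⟩),
    card_union_of_disjoint (disjoint_incident huv h₁), sym2_univ, inter_univ] at hcover
  obtain ⟨g, hg⟩ := exists_isPerfectOn (2 * t + 1) hF (univ \ {u, v, w})
    (by rw [card_univ_sdiff, hT]; exact hodd.tsub_odd ⟨1, rfl⟩)
    (.inl (by rw [card_univ_sdiff, hT]; omega))
  have := (isAlmostPerfectOn_triangle tri t).union hg disjoint_sdiff (mem_insert_self u _)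
  rw [union_sdiff_of_subset (subset_univ _)] at this
  exact ⟨u, _, this⟩

theorem hasPerfect_or_hasAlmost_deleteEdges {k : ℕ} (hk : Odd k) (hn : 6 ≤ Fintype.card V)
    (hFtop : ↑F ⊆ (⊤ : SimpleGraph V).edgeSet) (hFn : #F + 2 ≤ Fintype.card V) :
    HasPerfect ((⊤ : SimpleGraph V).deleteEdges ↑F) k ∨
      HasAlmost ((⊤ : SimpleGraph V).deleteEdges ↑F) k := by
  have hF (e : Sym2 V) (he : e ∈ F) : ¬ e.IsDiag := by simpa [edgeSet_top] using hFtop he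
  rcases Nat.even_or_odd (Fintype.card V) with heven | hodd
  · obtain ⟨h, hh⟩ := exists_isPerfectOn k hF univ (by rwa [card_univ]) (.inl (by simpa))
    exact .inl hh.hasPerfect
  · obtain ⟨t, rfl⟩ := hk
    obtain ⟨u, h, hh⟩ := exists_isAlmostPerfectOn hF (by grind) hodd hFn t
    exact .inr hh.hasAlmost

end Matchings

end IntKM

open IntKM

theorem stmt10 (k : ℕ) (hk : Odd k) (hk3 : 3 ≤ k) (n : ℕ) (hn : 6 ≤ n) :
    mpk (⊤ : SimpleGraph (Fin n)) k = n - 1 ∧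
    (∀ F : Finset (Sym2 (Fin n)), ↑F ⊆ (⊤ : SimpleGraph (Fin n)).edgeSet → F.card ≤ n - 2 →
      HasPerfect ((⊤ : SimpleGraph (Fin n)).deleteEdges ↑F) k ∨
        HasAlmost ((⊤ : SimpleGraph (Fin n)).deleteEdges ↑F) k) ∧
    (∃ v : Fin n,
      ¬ HasPerfect ((⊤ : SimpleGraph (Fin n)).deleteEdges {e | v ∈ e}) k ∧
      ¬ HasAlmost ((⊤ : SimpleGraph (Fin n)).deleteEdges {e | v ∈ e}) k) := by
  have hmatch (F : Finset (Sym2 (Fin n))) (hFtop : ↑F ⊆ (⊤ : SimpleGraph (Fin n)).edgeSet)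
      (hFn : #F ≤ n - 2) := hasPerfect_or_hasAlmost_deleteEdges (k := k) hk
    (by simpa using hn) hFtop (by simp; omega)
  have hkill (v : Fin n) {S : Set (Sym2 (Fin n))}
      (hS : ∀ e ∈ (⊤ : SimpleGraph (Fin n)).edgeSet, v ∈ e → e ∈ S) :
      ¬ HasPerfect ((⊤ : SimpleGraph (Fin n)).deleteEdges S) k ∧
        ¬ HasAlmost ((⊤ : SimpleGraph (Fin n)).deleteEdges S) k :=
    not_hasPerfect_and_not_hasAlmost_of_isolated (by omega) fun e he hve => by
      rw [edgeSet_deleteEdges] at he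
      exact he.2 (hS e he.1 hve)
  let v₀ : Fin n := ⟨0, by omega⟩
  refine ⟨IsLeast.csInf_eq ⟨⟨(⊤ : SimpleGraph (Fin n)).incidenceFinset v₀, ?_, ?_, ?_⟩, ?_⟩,
    hmatch, v₀, hkill v₀ fun e _ hve => hve⟩
  · rw [coe_incidenceFinset]
    exact incidenceSet_subset _ _
  · rw [card_incidenceFinset_eq_degree]
    simp
  · exact hkill v₀ fun e he hve => by simpa [coe_incidenceFinset] using ⟨he, hve⟩
  · rintro m ⟨F, hFtop, rfl, hP, hA⟩
    by_contra! hlt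
    exact (hmatch F hFtop (by omega)).elim hP hA
end

section
/- Let k ≥ 3 be odd. Then smp^k(K_4) = 2, where smp^k is the strong integer k-matching preclusion number: the minimum size of a set F of vertices and edges such that K_4 − F has neither a perfect nor an almost perfect integer k-matching. -/
open SimpleGraph Finset

open IntKM

namespace IntKM

lemma vsum_eq_sum {V : Type*} [Fintype V] [DecidableEq V] (h : Sym2 V → ℕ) (v : V) :
    vsum h v = ∑ u : V, h s(v, u) := by
  have himg : Finset.univ.filter (fun e => v ∈ e) = Finset.univ.image (fun u => s(v, u)) := by
    ext e
    simp only [Finset.mem_filter, Finset.mem_univ, true_and, Finset.mem_image]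
    constructor
    · intro hv
      obtain ⟨u, rfl⟩ := Sym2.mem_iff_exists.mp hv
      exact ⟨u, rfl⟩
    · rintro ⟨u, rfl⟩; exact Sym2.mem_mk_left v u
  rw [vsum, himg, Finset.sum_image]
  intro x _ y _ hxy
  exact Sym2.congr_right.mp hxy

lemma loop_zero {V : Type*} [Fintype V] [DecidableEq V] {G : SimpleGraph V} {k : ℕ}
    {h : Sym2 V → ℕ} (hm : IsIntKMatching G k h) (a : V) : h s(a, a) = 0 :=
  hm.2.1 _ (fun hmem => G.irrefl (G.mem_edgeSet.mp hmem))

lemma sum3 {W : Type*} [Fintype W] [DecidableEq W] {a b c : W}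
    (huniv : (Finset.univ : Finset W) = {a, b, c})
    (hab : a ≠ b) (hac : a ≠ c) (hbc : b ≠ c) (f : W → ℕ) :
    ∑ u : W, f u = f a + f b + f c := by
  rw [huniv, Finset.sum_insert (by simp [hab, hac]),
    Finset.sum_insert (by simp [hbc]), Finset.sum_singleton]
  omega

lemma sum4 {W : Type*} [Fintype W] [DecidableEq W] {a b c d : W}
    (huniv : (Finset.univ : Finset W) = {a, b, c, d})
    (hab : a ≠ b) (hac : a ≠ c) (had : a ≠ d) (hbc : b ≠ c) (hbd : b ≠ d) (hcd : c ≠ d)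
    (f : W → ℕ) :
    ∑ u : W, f u = f a + f b + f c + f d := by
  rw [huniv, Finset.sum_insert (by simp [hab, hac, had]),
    Finset.sum_insert (by simp [hbc, hbd]), Finset.sum_insert (by simp [hcd]),
    Finset.sum_singleton]
  omega

end IntKM

namespace IntKM

lemma noPA {W : Type*} [Fintype W] [DecidableEq W] (H : SimpleGraph W) (k : ℕ) (hk3 : 3 ≤ k)
    {a b c : W} (hab : a ≠ b) (hac : a ≠ c) (hbc : b ≠ c)
    (huniv : (Finset.univ : Finset W) = {a, b, c})
    (hnab : s(a, b) ∉ H.edgeSet) :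
    ¬ HasPerfect H k ∧ ¬ HasAlmost H k := by
  have key : ∀ h : Sym2 W → ℕ, IsIntKMatching H k h →
      vsum h a = h s(a, c) ∧ vsum h b = h s(b, c) ∧ vsum h c = h s(a, c) + h s(b, c) := by
    intro h hm
    have hzab : h s(a, b) = 0 := hm.2.1 _ hnab
    have e1 : vsum h a = h s(a, c) := by
      rw [vsum_eq_sum, sum3 huniv hab hac hbc, loop_zero hm, hzab]; omega
    have e2 : vsum h b = h s(b, c) := by
      rw [vsum_eq_sum, sum3 huniv hab hac hbc, loop_zero hm,
        show s(b, a) = s(a, b) from Sym2.eq_swap, hzab]; omega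
    have e3 : vsum h c = h s(a, c) + h s(b, c) := by
      rw [vsum_eq_sum, sum3 huniv hab hac hbc, loop_zero hm,
        show s(c, a) = s(a, c) from Sym2.eq_swap,
        show s(c, b) = s(b, c) from Sym2.eq_swap]; omega
    exact ⟨e1, e2, e3⟩
  constructor
  · rintro ⟨h, hm, hall⟩
    obtain ⟨e1, e2, e3⟩ := key h hm
    have := hall a; have := hall b; have := hall c
    omega
  · rintro ⟨h, hm, v', hv', hall⟩
    obtain ⟨e1, e2, e3⟩ := key h hm
    have hmem : v' ∈ ({a, b, c} : Finset W) := by rw [← huniv]; exact Finset.mem_univ _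
    simp only [Finset.mem_insert, Finset.mem_singleton] at hmem
    rcases hmem with rfl | rfl | rfl
    · have := hall b hab.symm; have := hall c hac.symm; omega
    · have := hall a hab; have := hall c hbc.symm; omega
    · have := hall a hac; have := hall b hbc; omega

lemma hasAlmost3 {W : Type*} [Fintype W] [DecidableEq W] (H : SimpleGraph W) (k : ℕ)
    (hk : Odd k) {a b c : W} (hab : a ≠ b) (hac : a ≠ c) (hbc : b ≠ c)
    (huniv : (Finset.univ : Finset W) = {a, b, c})
    (Hab : H.Adj a b) (Hbc : H.Adj b c) (Hca : H.Adj c a) :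
    HasAlmost H k := by
  obtain ⟨m, rfl⟩ := hk
  set h : Sym2 W → ℕ := fun e =>
    if e = s(a, b) then m + 1 else if e = s(b, c) then m else if e = s(a, c) then m else 0
    with hdef
  have hba := hab.symm; have hca := hac.symm; have hcb := hbc.symm
  have ea : vsum h a = 2 * m + 1 := by
    rw [vsum_eq_sum, sum3 huniv hab hac hbc]
    simp only [hdef, Sym2.eq_iff]
    simp [hab, hac, hbc, hba, hca, hcb]
    omega
  have eb : vsum h b = 2 * m + 1 := by
    rw [vsum_eq_sum, sum3 huniv hab hac hbc]
    simp only [hdef, Sym2.eq_iff]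
    simp [hab, hac, hbc, hba, hca, hcb]
    omega
  have ec : vsum h c = 2 * m := by
    rw [vsum_eq_sum, sum3 huniv hab hac hbc]
    simp only [hdef, Sym2.eq_iff]
    simp [hab, hac, hbc, hba, hca, hcb]
    omega
  have hvs : ∀ v : W, vsum h v ≤ 2 * m + 1 := by
    intro v
    have hmem : v ∈ ({a, b, c} : Finset W) := by rw [← huniv]; exact Finset.mem_univ _
    simp only [Finset.mem_insert, Finset.mem_singleton] at hmem
    rcases hmem with rfl | rfl | rfl <;> omega
  refine ⟨h, ⟨?_, ?_, hvs⟩, c, by omega, ?_⟩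
  · intro e
    simp only [hdef]
    split_ifs <;> omega
  · intro e he
    simp only [hdef]
    split_ifs with h1 h2 h3
    · exact absurd (H.mem_edgeSet.mpr Hab) (h1 ▸ he)
    · exact absurd (H.mem_edgeSet.mpr Hbc) (h2 ▸ he)
    · exact absurd (H.mem_edgeSet.mpr Hca.symm) (h3 ▸ he)
    · rfl
  · intro v hv
    have hmem : v ∈ ({a, b, c} : Finset W) := by rw [← huniv]; exact Finset.mem_univ _
    simp only [Finset.mem_insert, Finset.mem_singleton] at hmem
    rcases hmem with rfl | rfl | rfl
    · omega
    · omega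
    · exact absurd rfl hv

lemma hasPerfect4 {W : Type*} [Fintype W] [DecidableEq W] (H : SimpleGraph W) (k : ℕ)
    {a b c d : W} (hab : a ≠ b) (hac : a ≠ c) (had : a ≠ d) (hbc : b ≠ c) (hbd : b ≠ d)
    (hcd : c ≠ d) (huniv : (Finset.univ : Finset W) = {a, b, c, d})
    (Hab : H.Adj a b) (Hcd : H.Adj c d) : HasPerfect H k := by
  set h : Sym2 W → ℕ := fun e => if e = s(a, b) then k else if e = s(c, d) then k else 0
    with hdef
  have hba := hab.symm; have hca := hac.symm; have hda := had.symm
  have hcb := hbc.symm; have hdb := hbd.symm; have hdc := hcd.symm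
  have hall : ∀ v : W, vsum h v = k := by
    intro v
    have hmem : v ∈ ({a, b, c, d} : Finset W) := by rw [← huniv]; exact Finset.mem_univ _
    simp only [Finset.mem_insert, Finset.mem_singleton] at hmem
    rcases hmem with rfl | rfl | rfl | rfl <;>
    · rw [vsum_eq_sum, sum4 huniv hab hac had hbc hbd hcd]
      simp only [hdef, Sym2.eq_iff]
      simp [hab, hac, had, hbc, hbd, hcd, hba, hca, hda, hcb, hdb, hdc]
  refine ⟨h, ⟨?_, ?_, fun v => (hall v).le⟩, hall⟩
  · intro e; simp only [hdef]; split_ifs <;> omega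
  · intro e he
    simp only [hdef]
    split_ifs with h1 h2
    · exact absurd (H.mem_edgeSet.mpr Hab) (h1 ▸ he)
    · exact absurd (H.mem_edgeSet.mpr Hcd) (h2 ▸ he)
    · rfl

end IntKM


lemma IntKM.mk_ne {α : Type*} {p : α → Prop} {x y : α} (h : x ≠ y) {hx : p x} {hy : p y} :
    (⟨x, hx⟩ : Subtype p) ≠ ⟨y, hy⟩ := fun hc => h (congrArg Subtype.val hc)

theorem stmt11 (k : ℕ) (hk : Odd k) (hk3 : 3 ≤ k) :
    smpk (⊤ : SimpleGraph (Fin 4)) k = 2 := by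
  have h2 : 2 ∈ {n | ∃ (S : Finset (Fin 4)) (F : Finset (Sym2 (Fin 4))),
      ↑F ⊆ (⊤ : SimpleGraph (Fin 4)).edgeSet ∧ S.card + F.card = n ∧
      ¬ HasPerfect (((⊤ : SimpleGraph (Fin 4)).deleteEdges ↑F).induce ((↑(Sᶜ) : Set (Fin 4)))) k ∧
      ¬ HasAlmost (((⊤ : SimpleGraph (Fin 4)).deleteEdges ↑F).induce ((↑(Sᶜ) : Set (Fin 4)))) k} := by
    refine ⟨{0}, {s((1 : Fin 4), (2 : Fin 4))}, ?_, by simp, ?_⟩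
    · intro e he
      simp only [Finset.coe_singleton, Set.mem_singleton_iff] at he
      subst he
      simp [SimpleGraph.mem_edgeSet]
    · have hm1 : (1 : Fin 4) ∈ (↑(({0} : Finset (Fin 4))ᶜ) : Set (Fin 4)) := by simp
      have hm2 : (2 : Fin 4) ∈ (↑(({0} : Finset (Fin 4))ᶜ) : Set (Fin 4)) := by simp
      have hm3 : (3 : Fin 4) ∈ (↑(({0} : Finset (Fin 4))ᶜ) : Set (Fin 4)) := by simp
      refine noPA _ k hk3 (a := ⟨1, hm1⟩) (b := ⟨2, hm2⟩) (c := ⟨3, hm3⟩)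
        (IntKM.mk_ne (by decide)) (IntKM.mk_ne (by decide)) (IntKM.mk_ne (by decide)) ?_ ?_
      · refine (Finset.eq_univ_iff_forall.mpr ?_).symm
        rintro ⟨x, hx⟩
        have hx' : x ≠ 0 := by simpa using hx
        fin_cases x <;> simp_all [Subtype.ext_iff]
      · intro hcon
        rw [SimpleGraph.mem_edgeSet] at hcon
        simp only [SimpleGraph.comap_adj, Function.Embedding.coe_subtype] at hcon
        rw [SimpleGraph.deleteEdges_adj] at hcon
        exact hcon.2 (by simp)
  have hlb : ∀ n ∈ {n | ∃ (S : Finset (Fin 4)) (F : Finset (Sym2 (Fin 4))),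
      ↑F ⊆ (⊤ : SimpleGraph (Fin 4)).edgeSet ∧ S.card + F.card = n ∧
      ¬ HasPerfect (((⊤ : SimpleGraph (Fin 4)).deleteEdges ↑F).induce ((↑(Sᶜ) : Set (Fin 4)))) k ∧
      ¬ HasAlmost (((⊤ : SimpleGraph (Fin 4)).deleteEdges ↑F).induce ((↑(Sᶜ) : Set (Fin 4)))) k},
      2 ≤ n := by
    intro n hn
    by_contra hlt
    push_neg at hlt
    obtain ⟨S, F, hFsub, hcard, hP, hA⟩ := hn
    have hcases : S.card = 0 ∧ F.card = 0 ∨ S.card = 1 ∧ F.card = 0 ∨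
        S.card = 0 ∧ F.card = 1 := by omega
    rcases hcases with ⟨hS0, hF0⟩ | ⟨hS1, hF0⟩ | ⟨hS0, hF1⟩
    · -- nothing deleted: K4 has a perfect k-matching
      rw [Finset.card_eq_zero] at hS0 hF0
      subst hS0; subst hF0
      apply hP
      have hmem : ∀ x : Fin 4, x ∈ (↑((∅ : Finset (Fin 4))ᶜ) : Set (Fin 4)) := by simp
      refine hasPerfect4 _ k (a := ⟨0, hmem 0⟩) (b := ⟨1, hmem 1⟩) (c := ⟨2, hmem 2⟩)
        (d := ⟨3, hmem 3⟩) (IntKM.mk_ne (by decide)) (IntKM.mk_ne (by decide))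
        (IntKM.mk_ne (by decide)) (IntKM.mk_ne (by decide))
        (IntKM.mk_ne (by decide)) (IntKM.mk_ne (by decide)) ?_ ?_ ?_
      · refine (Finset.eq_univ_iff_forall.mpr ?_).symm
        rintro ⟨x, hx⟩
        fin_cases x <;> simp [Subtype.ext_iff]
      · simp only [SimpleGraph.comap_adj, Function.Embedding.coe_subtype,
          SimpleGraph.deleteEdges_adj, SimpleGraph.top_adj]
        exact ⟨by decide, by simp⟩
      · simp only [SimpleGraph.comap_adj, Function.Embedding.coe_subtype,
          SimpleGraph.deleteEdges_adj, SimpleGraph.top_adj]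
        exact ⟨by decide, by simp⟩
    · -- one vertex deleted: the triangle has an almost perfect k-matching
      rw [Finset.card_eq_zero] at hF0
      obtain ⟨v, rfl⟩ := Finset.card_eq_one.mp hS1
      subst hF0
      apply hA
      have hne : ∀ w : Fin 4, w + 1 ≠ w ∧ w + 2 ≠ w ∧ w + 3 ≠ w ∧ w + 1 ≠ w + 2 ∧
          w + 1 ≠ w + 3 ∧ w + 2 ≠ w + 3 := by decide
      have hcover : ∀ w x : Fin 4, x ≠ w → x = w + 1 ∨ x = w + 2 ∨ x = w + 3 := by decide
      have hmem : ∀ x : Fin 4, x ≠ v → x ∈ (↑(({v} : Finset (Fin 4))ᶜ) : Set (Fin 4)) := by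
        intro x hx; simp [hx]
      refine hasAlmost3 _ k hk (a := ⟨v + 1, hmem _ (hne v).1⟩) (b := ⟨v + 2, hmem _ (hne v).2.1⟩)
        (c := ⟨v + 3, hmem _ (hne v).2.2.1⟩)
        (IntKM.mk_ne (hne v).2.2.2.1)
        (IntKM.mk_ne (hne v).2.2.2.2.1)
        (IntKM.mk_ne (hne v).2.2.2.2.2) ?_ ?_ ?_ ?_
      · refine (Finset.eq_univ_iff_forall.mpr ?_).symm
        rintro ⟨x, hx⟩
        have hx' : x ≠ v := by simpa using hx
        rcases hcover v x hx' with rfl | rfl | rfl <;>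
          simp [Finset.mem_insert, Subtype.ext_iff, (hne v).2.2.2.1, (hne v).2.2.2.2.1,
            (hne v).2.2.2.2.2]
      · simp only [SimpleGraph.comap_adj, Function.Embedding.coe_subtype,
          SimpleGraph.deleteEdges_adj, SimpleGraph.top_adj]
        exact ⟨(hne v).2.2.2.1, by simp⟩
      · simp only [SimpleGraph.comap_adj, Function.Embedding.coe_subtype,
          SimpleGraph.deleteEdges_adj, SimpleGraph.top_adj]
        exact ⟨(hne v).2.2.2.2.2, by simp⟩
      · simp only [SimpleGraph.comap_adj, Function.Embedding.coe_subtype,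
          SimpleGraph.deleteEdges_adj, SimpleGraph.top_adj]
        exact ⟨fun hcon => (hne v).2.2.2.2.1 hcon.symm, by simp⟩
    · -- one edge deleted: K4 minus an edge has a perfect k-matching
      rw [Finset.card_eq_zero] at hS0
      subst hS0
      obtain ⟨e, rfl⟩ := Finset.card_eq_one.mp hF1
      apply hP
      induction e using Sym2.ind with
      | _ x y =>
        have key : ∀ x y : Fin 4, ∃ a b c d : Fin 4, a ≠ b ∧ a ≠ c ∧ a ≠ d ∧ b ≠ c ∧ b ≠ d ∧
            c ≠ d ∧ ¬((a = x ∧ b = y) ∨ (a = y ∧ b = x)) ∧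
            ¬((c = x ∧ d = y) ∨ (c = y ∧ d = x)) ∧
            ∀ z : Fin 4, z = a ∨ z = b ∨ z = c ∨ z = d := by decide
        obtain ⟨a, b, c, d, hab, hac, had, hbc, hbd, hcd, hnab, hncd, hcov⟩ := key x y
        have hmem : ∀ z : Fin 4, z ∈ (↑((∅ : Finset (Fin 4))ᶜ) : Set (Fin 4)) := by simp
        refine hasPerfect4 _ k (a := ⟨a, hmem a⟩) (b := ⟨b, hmem b⟩) (c := ⟨c, hmem c⟩)
          (d := ⟨d, hmem d⟩) (IntKM.mk_ne hab) (IntKM.mk_ne hac)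
          (IntKM.mk_ne had) (IntKM.mk_ne hbc)
          (IntKM.mk_ne hbd) (IntKM.mk_ne hcd) ?_ ?_ ?_
        · refine (Finset.eq_univ_iff_forall.mpr ?_).symm
          rintro ⟨z, hz⟩
          rcases hcov z with rfl | rfl | rfl | rfl <;>
            simp [Finset.mem_insert, Subtype.ext_iff, hab, hac, had, hbc, hbd, hcd]
        · simp only [SimpleGraph.comap_adj, Function.Embedding.coe_subtype,
            SimpleGraph.deleteEdges_adj, SimpleGraph.top_adj]
          refine ⟨hab, ?_⟩
          simp only [Finset.coe_singleton, Set.mem_singleton_iff, Sym2.eq_iff]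
          tauto
        · simp only [SimpleGraph.comap_adj, Function.Embedding.coe_subtype,
            SimpleGraph.deleteEdges_adj, SimpleGraph.top_adj]
          refine ⟨hcd, ?_⟩
          simp only [Finset.coe_singleton, Set.mem_singleton_iff, Sym2.eq_iff]
          tauto
  rw [smpk]
  exact le_antisymm (Nat.sInf_le h2) (le_csInf ⟨2, h2⟩ hlb)
end
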